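/- Let γ : ℝ → U be a smooth g-unit-speed geodesic and suppose there is a smooth function α : ℝ → ℝ such that ∇f(γ(s)) = α(s)·γ̇(s) for all s ∈ ℝ. Let I ⊆ ℝ be an open interval and σ : I → ℝ a C² function. Then q := γ ∘ σ is a solution of the dynamics Dq̇ = ∇f(q) on I if and only if σ̈(t) = α(σ(t)) for all t ∈ I. (Motions on the mode are governed by a single second-order ODE.) -/

import Mathlib

open Matrix

/-- Partial derivative in direction `i` of a scalar function on `ℝⁿ`. -/
noncomputable def pd {n : ℕ} (i : Fin n) (h : (Fin n → ℝ) → ℝ) (x : Fin n → ℝ) : ℝ :=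
  fderiv ℝ h x (Pi.single i 1)

/-- Christoffel symbols `Γᵏᵢⱼ` of the Levi-Civita connection of the metric `g`
in local coordinates. -/
noncomputable def christoffel {n : ℕ} (g : (Fin n → ℝ) → Matrix (Fin n) (Fin n) ℝ)
    (k i j : Fin n) (x : Fin n → ℝ) : ℝ :=
  (1 / 2) * ∑ l, (g x)⁻¹ k l *
    (pd i (fun y => g y j l) x + pd j (fun y => g y i l) x - pd l (fun y => g y i j) x)

/-- Covariant acceleration `(Dq̇)ᵏ(t) = q̈ᵏ(t) + Σᵢⱼ Γᵏᵢⱼ(q(t)) q̇ⁱ(t) q̇ʲ(t)` of a curve. -/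
noncomputable def covAccel {n : ℕ} (g : (Fin n → ℝ) → Matrix (Fin n) (Fin n) ℝ)
    (q : ℝ → Fin n → ℝ) (t : ℝ) : Fin n → ℝ :=
  fun k => deriv (deriv q) t k +
    ∑ i, ∑ j, christoffel g k i j (q t) * deriv q t i * deriv q t j

/-- The `g`-gradient `(∇f)ᵏ(x) = Σⱼ (g(x)⁻¹)ᵏʲ ∂ⱼf(x)` of a scalar function `f`. -/
noncomputable def gGrad {n : ℕ} (g : (Fin n → ℝ) → Matrix (Fin n) (Fin n) ℝ)
    (f : (Fin n → ℝ) → ℝ) (x : Fin n → ℝ) : Fin n → ℝ :=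
  fun k => ∑ j, (g x)⁻¹ k j * pd j f x

/-! Writing `q = γ ∘ σ`, the chain rule gives `q̇ = σ̇ • γ̇(σ)` and
`q̈ = σ̇² • γ̈(σ) + σ̈ • γ̇(σ)`; since the Christoffel term is quadratic in the velocity,
`Dq̇ = σ̈ • γ̇(σ) + σ̇² • (Dγ̇)(σ) = σ̈ • γ̇(σ)` along a geodesic. The dynamics then reads
`σ̈ • γ̇(σ) = α(σ) • γ̇(σ)`, and unit speed makes `γ̇` nonzero, so it is equivalent to
`σ̈ = α ∘ σ`. -/

open Filter Topology

section Reparametrization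

variable {E : Type*} [NormedAddCommGroup E] [NormedSpace ℝ E] {γ : ℝ → E} {σ : ℝ → ℝ} {t : ℝ}

theorem deriv_comp_eventuallyEq (hγ : Differentiable ℝ γ)
    (hσ : ∀ᶠ s in 𝓝 t, DifferentiableAt ℝ σ s) :
    deriv (fun s => γ (σ s)) =ᶠ[𝓝 t] fun s => deriv σ s • deriv γ (σ s) :=
  hσ.mono fun s hs => deriv.scomp s (hγ (σ s)) hs

theorem deriv_deriv_comp (hγ : Differentiable ℝ γ) (hγ' : DifferentiableAt ℝ (deriv γ) (σ t))
    (hσ : ∀ᶠ s in 𝓝 t, DifferentiableAt ℝ σ s) (hσ' : DifferentiableAt ℝ (deriv σ) t) :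
    deriv (deriv fun s => γ (σ s)) t =
      deriv σ t ^ 2 • deriv (deriv γ) (σ t) + deriv (deriv σ) t • deriv γ (σ t) := by
  have hvel : HasDerivAt (fun s => deriv γ (σ s)) (deriv σ t • deriv (deriv γ) (σ t)) t :=
    hγ'.hasDerivAt.scomp t hσ.self_of_nhds.hasDerivAt
  rw [(deriv_comp_eventuallyEq hγ hσ).deriv_eq]
  exact (hσ'.hasDerivAt.smul hvel).deriv.trans (by rw [smul_smul, ← sq, add_comm])

end Reparametrization

theorem sum_sum_mul_smul_mul_smul {R ι : Type*} [CommSemiring R] [Fintype ι] (Γ : ι → ι → R)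
    (c : R) (v : ι → R) :
    ∑ i, ∑ j, Γ i j * (c • v) i * (c • v) j = c ^ 2 * ∑ i, ∑ j, Γ i j * v i * v j := by
  simp only [Finset.mul_sum, Pi.smul_apply, smul_eq_mul]
  exact Finset.sum_congr rfl fun i _ => Finset.sum_congr rfl fun j _ => by ring

theorem covAccel_comp {n : ℕ} (g : (Fin n → ℝ) → Matrix (Fin n) (Fin n) ℝ)
    {γ : ℝ → Fin n → ℝ} {σ : ℝ → ℝ} {t : ℝ}
    (hγ : Differentiable ℝ γ) (hγ' : DifferentiableAt ℝ (deriv γ) (σ t))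
    (hσ : ∀ᶠ s in 𝓝 t, DifferentiableAt ℝ σ s) (hσ' : DifferentiableAt ℝ (deriv σ) t) :
    covAccel g (fun s => γ (σ s)) t =
      deriv (deriv σ) t • deriv γ (σ t) + deriv σ t ^ 2 • covAccel g γ (σ t) := by
  have hvel : deriv (fun s => γ (σ s)) t = deriv σ t • deriv γ (σ t) :=
    deriv.scomp t (hγ (σ t)) hσ.self_of_nhds
  funext k
  simp only [covAccel, deriv_deriv_comp hγ hγ' hσ hσ', hvel, sum_sum_mul_smul_mul_smul]
  simp only [covAccel, Pi.add_apply, Pi.smul_apply, smul_eq_mul]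
  ring

theorem ne_zero_of_dotProduct_mulVec_self_eq_one {R m : Type*} [CommSemiring R] [Nontrivial R]
    [Fintype m] {A : Matrix m m R} {v : m → R} (hv : v ⬝ᵥ A *ᵥ v = 1) : v ≠ 0 := by
  rintro rfl
  simp at hv

theorem solution_on_mode_iff_scalar_ode_general
    {n : ℕ}
    (g : (Fin n → ℝ) → Matrix (Fin n) (Fin n) ℝ)
    (f : (Fin n → ℝ) → ℝ)
    (γ : ℝ → Fin n → ℝ) (hγsmooth : ContDiff ℝ (⊤ : ℕ∞) γ)
    (hγunit : ∀ s : ℝ, deriv γ s ⬝ᵥ (g (γ s)) *ᵥ deriv γ s = 1)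
    (hγgeo : ∀ s : ℝ, covAccel g γ s = 0)
    (α : ℝ → ℝ)
    (hgrad : ∀ s : ℝ, gGrad g f (γ s) = α s • deriv γ s)
    (I : Set ℝ) (hIopen : IsOpen I)
    (σ : ℝ → ℝ) (hσ : ContDiffOn ℝ 2 σ I) :
    (∀ t ∈ I, covAccel g (fun τ => γ (σ τ)) t = gGrad g f (γ (σ t))) ↔
      (∀ t ∈ I, deriv (deriv σ) t = α (σ t)) := by
  have hγdiff : Differentiable ℝ γ := hγsmooth.differentiable (by simp)
  have hγ'diff : Differentiable ℝ (deriv γ) :=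
    (contDiff_infty_iff_deriv.mp hγsmooth).2.differentiable (by simp)
  have hσ'diff : DifferentiableOn ℝ (deriv σ) I :=
    (hσ.deriv_of_isOpen (m := 1) hIopen (by norm_num)).differentiableOn (by norm_num)
  have hmode : ∀ t ∈ I, covAccel g (fun τ => γ (σ τ)) t = deriv (deriv σ) t • deriv γ (σ t) := by
    intro t ht
    have hσdiff : ∀ᶠ s in 𝓝 t, DifferentiableAt ℝ σ s :=
      eventually_of_mem (hIopen.mem_nhds ht) fun s hs =>
        (hσ.contDiffAt (hIopen.mem_nhds hs)).differentiableAt (by norm_num)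
    rw [covAccel_comp g hγdiff (hγ'diff _) hσdiff (hσ'diff.differentiableAt (hIopen.mem_nhds ht)),
      hγgeo, smul_zero, add_zero]
  refine forall₂_congr fun t ht => ?_
  rw [hmode t ht, hgrad]
  exact (smul_left_injective ℝ (ne_zero_of_dotProduct_mulVec_self_eq_one (hγunit (σ t)))).eq_iff

/-- Along a `g`-unit-speed geodesic `γ` whose tangential potential gradient is
`∇f(γ(s)) = α(s)·γ̇(s)`, a reparametrized curve `q = γ ∘ σ` (with `σ` a `C²` function on an
open interval `I`) solves the dynamics `Dq̇ = ∇f(q)` on `I` if and only if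
`σ̈(t) = α(σ(t))` on `I`: motions on the mode are governed by a single second-order ODE. -/
theorem solution_on_mode_iff_scalar_ode
    {n : ℕ} (hn : 1 ≤ n) (U : Set (Fin n → ℝ)) (hUopen : IsOpen U)
    (g : (Fin n → ℝ) → Matrix (Fin n) (Fin n) ℝ)
    (hg : ∀ i j, ContDiffOn ℝ (⊤ : ℕ∞) (fun x => g x i j) U)
    (hgsymm : ∀ x ∈ U, (g x).IsSymm) (hgpos : ∀ x ∈ U, (g x).PosDef)
    (f : (Fin n → ℝ) → ℝ) (hf : ContDiffOn ℝ (⊤ : ℕ∞) f U)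
    (γ : ℝ → Fin n → ℝ) (hγsmooth : ContDiff ℝ (⊤ : ℕ∞) γ) (hγU : ∀ s : ℝ, γ s ∈ U)
    (hγunit : ∀ s : ℝ, deriv γ s ⬝ᵥ (g (γ s)) *ᵥ deriv γ s = 1)
    (hγgeo : ∀ s : ℝ, covAccel g γ s = 0)
    (α : ℝ → ℝ) (hα : ContDiff ℝ (⊤ : ℕ∞) α)
    (hgrad : ∀ s : ℝ, gGrad g f (γ s) = α s • deriv γ s)
    (I : Set ℝ) (hIopen : IsOpen I) (hIconn : I.OrdConnected)
    (σ : ℝ → ℝ) (hσ : ContDiffOn ℝ 2 σ I) :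
    (∀ t ∈ I, covAccel g (fun τ => γ (σ τ)) t = gGrad g f (γ (σ t))) ↔
      (∀ t ∈ I, deriv (deriv σ) t = α (σ t)) :=
  solution_on_mode_iff_scalar_ode_general g f γ hγsmooth hγunit hγgeo α hgrad I hIopen σ hσ
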